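/- Let δ > 0, α > 0, c ≥ 0, β ∈ ℝ, φ_∞ ∈ ℝ, and let L be a positive measurable slowly varying function. Let (t_n)_{n≥1} and (b_n)_{n≥1} be sequences of reals with t_n → +∞ and b_n − t_n → β as n → ∞, and let (φ_n)_{n≥1} be a bounded sequence of reals with φ_n → φ_∞. Assume that for every Δ > 0, (R^α/L(R))·∑_{n : R ≤ t_n < R+Δ} e^{−δ t_n} → c·Δ as R → +∞. Then for every Δ > 0, (R^α/L(R))·∑_{n : R ≤ b_n < R+Δ} φ_n·e^{−δ b_n} → φ_∞·c·e^{−δβ}·Δ as R → +∞. -/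

import Mathlib

set_option maxHeartbeats 1000000

/-- A positive function is slowly varying (at `+∞`) if `L (c * t) / L t → 1`
as `t → +∞` for every `c > 0`. -/
def SlowlyVarying (L : ℝ → ℝ) : Prop :=
  ∀ c : ℝ, 0 < c → Filter.Tendsto (fun t => L (c * t) / L t) Filter.atTop (nhds 1)

open Filter Set MeasureTheory


private lemma key_seq (h : ℝ → ℝ) (hm : Measurable h)
    (hs : ∀ u : ℝ, Tendsto (fun x => h (x + u) - h x) atTop (nhds (0:ℝ)))
    (x u : ℕ → ℝ) (hx : Tendsto x atTop atTop) (hu : Tendsto u atTop (nhds 0)) :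
    Tendsto (fun k => h (x k + u k) - h (x k)) atTop (nhds 0) := by
  have hy : Tendsto (fun k => x k + u k) atTop atTop := by
    apply tendsto_atTop_mono' atTop ?_ (tendsto_atTop_add_const_right atTop (-1 : ℝ) hx)
    filter_upwards [hu.eventually (eventually_ge_nhds (by norm_num : (-1:ℝ) < 0))] with k hk
    linarith
  rw [Metric.tendsto_atTop]
  intro ε' hε'
  set ε : ℝ := ε' / 3 with hεdef
  have hε : 0 < ε := by positivity
  set E : ℕ → Set ℝ :=
    fun m => Icc (0:ℝ) 3 ∩ ⋂ (k : ℕ), ⋂ (_ : m ≤ k), {v | |h (x k + v) - h (x k)| ≤ ε} with hE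
  set F : ℕ → Set ℝ :=
    fun m => Icc (-1:ℝ) 3 ∩ ⋂ (k : ℕ), ⋂ (_ : m ≤ k),
      {v | |h (x k + u k + v) - h (x k + u k)| ≤ ε} with hF
  have hmemE : ∀ m v, v ∈ E m ↔ v ∈ Icc (0:ℝ) 3 ∧ ∀ k, m ≤ k → |h (x k + v) - h (x k)| ≤ ε := by
    intro m v; simp [hE]
  have hmemF : ∀ m v, v ∈ F m ↔
      v ∈ Icc (-1:ℝ) 3 ∧ ∀ k, m ≤ k → |h (x k + u k + v) - h (x k + u k)| ≤ ε := by
    intro m v; simp [hF]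
  have hEmeas : ∀ m, MeasurableSet (E m) := by
    intro m
    apply measurableSet_Icc.inter
    refine MeasurableSet.iInter fun k => MeasurableSet.iInter fun _ => ?_
    exact measurableSet_le ((hm.comp (measurable_const.add measurable_id)).sub
      measurable_const).abs measurable_const
  have hFmeas : ∀ m, MeasurableSet (F m) := by
    intro m
    apply measurableSet_Icc.inter
    refine MeasurableSet.iInter fun k => MeasurableSet.iInter fun _ => ?_
    exact measurableSet_le ((hm.comp (measurable_const.add measurable_id)).sub
      measurable_const).abs measurable_const
  have hEmono : Monotone E := by
    intro m m' hmm' v hv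
    rw [hmemE] at hv ⊢
    exact ⟨hv.1, fun k hk => hv.2 k (le_trans hmm' hk)⟩
  have hFmono : Monotone F := by
    intro m m' hmm' v hv
    rw [hmemF] at hv ⊢
    exact ⟨hv.1, fun k hk => hv.2 k (le_trans hmm' hk)⟩
  have hEunion : (⋃ m, E m) = Icc (0:ℝ) 3 := by
    apply Set.Subset.antisymm
    · exact Set.iUnion_subset fun m v hv => ((hmemE m v).1 hv).1
    · intro v hv
      have h1 : Tendsto (fun k => h (x k + v) - h (x k)) atTop (nhds 0) := by
        have := (hs v).comp hx
        simpa [Function.comp_def] using this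
      rw [Metric.tendsto_atTop] at h1
      obtain ⟨N, hN⟩ := h1 ε hε
      refine Set.mem_iUnion.2 ⟨N, (hmemE N v).2 ⟨hv, fun k hk => ?_⟩⟩
      have := hN k hk
      rw [Real.dist_eq, sub_zero] at this
      exact this.le
  have hFunion : (⋃ m, F m) = Icc (-1:ℝ) 3 := by
    apply Set.Subset.antisymm
    · exact Set.iUnion_subset fun m v hv => ((hmemF m v).1 hv).1
    · intro v hv
      have h1 : Tendsto (fun k => h (x k + u k + v) - h (x k + u k)) atTop (nhds 0) := by
        have := (hs v).comp hy
        simpa [Function.comp_def] using this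
      rw [Metric.tendsto_atTop] at h1
      obtain ⟨N, hN⟩ := h1 ε hε
      refine Set.mem_iUnion.2 ⟨N, (hmemF N v).2 ⟨hv, fun k hk => ?_⟩⟩
      have := hN k hk
      rw [Real.dist_eq, sub_zero] at this
      exact this.le
  have hEvol : Tendsto (fun m => volume (E m)) atTop (nhds (ENNReal.ofReal 3)) := by
    have := tendsto_measure_iUnion_atTop (μ := volume) hEmono
    rwa [hEunion, Real.volume_Icc, show (3:ℝ) - 0 = 3 by norm_num] at this
  have hFvol : Tendsto (fun m => volume (F m)) atTop (nhds (ENNReal.ofReal 4)) := by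
    have := tendsto_measure_iUnion_atTop (μ := volume) hFmono
    rwa [hFunion, Real.volume_Icc, show (3:ℝ) - (-1) = 4 by norm_num] at this
  have hElt : ∀ᶠ m in atTop, ENNReal.ofReal (5/2) < volume (E m) :=
    hEvol.eventually (eventually_gt_nhds (by rw [ENNReal.ofReal_lt_ofReal_iff] <;> norm_num))
  have hFlt : ∀ᶠ m in atTop, ENNReal.ofReal (7/2) < volume (F m) :=
    hFvol.eventually (eventually_gt_nhds (by rw [ENNReal.ofReal_lt_ofReal_iff] <;> norm_num))
  obtain ⟨m₀, hm₀E, hm₀F⟩ := ((hElt.and hFlt).exists)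
  have hub : ∀ᶠ k in atTop, |u k| ≤ 1 := by
    have h1 := Metric.tendsto_atTop.1 hu 1 one_pos
    obtain ⟨N, hN⟩ := h1
    rw [eventually_atTop]
    exact ⟨N, fun k hk => by have := hN k hk; rw [Real.dist_eq, sub_zero] at this; exact this.le⟩
  have hfin : ∀ᶠ k in atTop, dist (h (x k + u k) - h (x k)) 0 < ε' := by
    filter_upwards [hub, eventually_ge_atTop m₀] with k hk1 hk2
    set A : Set ℝ := E m₀ with hA
    set B : Set ℝ := (fun v => v - u k) ⁻¹' (F m₀) with hB
    have hvolB : volume B = volume (F m₀) := by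
      have heq : (fun v : ℝ => v - u k) = fun v => v + (-u k) := by funext v; ring
      rw [hB, heq]
      exact measure_preimage_add_right volume (-u k) (F m₀)
    have hABsub : A ∪ B ⊆ Icc (-2:ℝ) 4 := by
      rintro v (hv | hv)
      · have := ((hmemE m₀ v).1 hv).1
        exact ⟨by linarith [this.1], by linarith [this.2]⟩
      · have h2 : v - u k ∈ Icc (-1:ℝ) 3 := ((hmemF m₀ _).1 hv).1
        have := abs_le.1 hk1
        exact ⟨by linarith [h2.1, this.1], by linarith [h2.2, this.2]⟩
    have hABle : volume (A ∪ B) ≤ ENNReal.ofReal 6 := by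
      calc volume (A ∪ B) ≤ volume (Icc (-2:ℝ) 4) := measure_mono hABsub
        _ = ENNReal.ofReal 6 := by rw [Real.volume_Icc]; norm_num
    have hnonempty : (A ∩ B).Nonempty := by
      by_contra hcon
      rw [Set.not_nonempty_iff_eq_empty] at hcon
      have hdisj : Disjoint A B := Set.disjoint_iff_inter_eq_empty.2 hcon
      have hBmeas : MeasurableSet B :=
        (hFmeas m₀).preimage (measurable_id.sub measurable_const)
      have hun : volume (A ∪ B) = volume A + volume B := measure_union hdisj hBmeas
      have hgt : ENNReal.ofReal 6 < volume A + volume B := by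
        have h3 := ENNReal.add_lt_add hm₀E (hvolB ▸ hm₀F)
        rwa [← ENNReal.ofReal_add (by norm_num) (by norm_num),
          show (5/2:ℝ) + 7/2 = 6 by norm_num] at h3
      rw [← hun] at hgt
      exact absurd hABle (not_le.2 hgt)
    obtain ⟨v, hvA, hvB⟩ := hnonempty
    have e1 : |h (x k + v) - h (x k)| ≤ ε := ((hmemE m₀ v).1 hvA).2 k hk2
    have e2 : |h (x k + u k + (v - u k)) - h (x k + u k)| ≤ ε :=
      ((hmemF m₀ _).1 hvB).2 k hk2
    rw [show x k + u k + (v - u k) = x k + v by ring] at e2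
    rw [Real.dist_eq, sub_zero]
    calc |h (x k + u k) - h (x k)|
        ≤ |h (x k + u k) - h (x k + v)| + |h (x k + v) - h (x k)| := abs_sub_le _ _ _
      _ ≤ ε + ε := add_le_add (by rw [abs_sub_comm]; exact e2) e1
      _ < ε' := by rw [hεdef]; linarith
  rw [eventually_atTop] at hfin
  exact hfin

private lemma Lshift (L : ℝ → ℝ) (hLpos : ∀ t ≥ (1:ℝ), 0 < L t)
    (hLmeas : Measurable L) (hLslow : SlowlyVarying L) (s : ℝ) :
    Tendsto (fun R => L (R + s) / L R) atTop (nhds 1) := by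
  set h : ℝ → ℝ := fun x => Real.log (L (Real.exp x)) with hh
  have hm : Measurable h := Real.measurable_log.comp (hLmeas.comp Real.measurable_exp)
  have hs : ∀ u : ℝ, Tendsto (fun x => h (x + u) - h x) atTop (nhds (0:ℝ)) := by
    intro u
    have h1 : Tendsto (fun t : ℝ => L (Real.exp u * t) / L t) atTop (nhds 1) :=
      hLslow _ (Real.exp_pos u)
    have h2 : Tendsto (fun x : ℝ => L (Real.exp u * Real.exp x) / L (Real.exp x))
        atTop (nhds 1) := by
      have := h1.comp Real.tendsto_exp_atTop
      simpa [Function.comp_def] using this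
    have h3 : Tendsto (fun x : ℝ => Real.log (L (Real.exp u * Real.exp x) / L (Real.exp x)))
        atTop (nhds 0) := by
      have := (Real.continuousAt_log one_ne_zero).tendsto.comp h2
      simpa [Function.comp_def, Real.log_one] using this
    apply h3.congr'
    filter_upwards [eventually_ge_atTop (0:ℝ), eventually_ge_atTop (-u)] with x hx1 hx2
    have he1 : (1:ℝ) ≤ Real.exp x := Real.one_le_exp hx1
    have he2 : (1:ℝ) ≤ Real.exp (x + u) := Real.one_le_exp (by linarith)
    have hp1 : 0 < L (Real.exp x) := hLpos _ he1
    have hp2 : 0 < L (Real.exp (x + u)) := hLpos _ he2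
    rw [hh]
    rw [show Real.exp u * Real.exp x = Real.exp (x + u) by rw [← Real.exp_add]; ring_nf]
    rw [Real.log_div (ne_of_gt hp2) (ne_of_gt hp1)]
  rw [tendsto_iff_seq_tendsto]
  intro R hR
  have hR1 : ∀ᶠ k in atTop, max 1 (1 - s) < R k := hR.eventually (eventually_gt_atTop _)
  set x : ℕ → ℝ := fun k => Real.log (R k) with hx
  set u : ℕ → ℝ := fun k => Real.log (R k + s) - Real.log (R k) with hu
  have hxt : Tendsto x atTop atTop := Real.tendsto_log_atTop.comp hR
  have hut : Tendsto u atTop (nhds 0) := by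
    have h1 : Tendsto (fun k => (R k + s) / R k) atTop (nhds 1) := by
      have h2 : Tendsto (fun k => 1 + s / R k) atTop (nhds 1) := by
        have hd := (tendsto_const_nhds (x := (s:ℝ))).div_atTop hR
        have := (tendsto_const_nhds (x := (1:ℝ)) (f := (atTop : Filter ℕ))).add hd
        simpa using this
      apply h2.congr'
      filter_upwards [hR1] with k hk
      have : (0:ℝ) < R k := lt_of_lt_of_le (by positivity) ((le_max_left 1 (1-s)).trans hk.le)
      field_simp
    have h3 : Tendsto (fun k => Real.log ((R k + s) / R k)) atTop (nhds 0) := by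
      have := (Real.continuousAt_log one_ne_zero).tendsto.comp h1
      simpa [Function.comp_def, Real.log_one] using this
    apply h3.congr'
    filter_upwards [hR1] with k hk
    have hRk : (1:ℝ) ≤ R k := (le_max_left 1 (1-s)).trans hk.le
    have hRs : (1:ℝ) ≤ R k + s := by have := (le_max_right 1 (1-s)).trans hk.le; linarith
    rw [hu, Real.log_div (by linarith) (by linarith)]
  have hkey := key_seq h hm hs x u hxt hut
  have hexp : Tendsto (fun k => Real.exp (h (x k + u k) - h (x k))) atTop (nhds 1) := by
    have := Real.continuous_exp.continuousAt.tendsto.comp hkey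
    simpa [Function.comp_def, Real.exp_zero] using this
  apply hexp.congr'
  filter_upwards [hR1] with k hk
  have hRk : (1:ℝ) ≤ R k := (le_max_left 1 (1-s)).trans hk.le
  have hRs : (1:ℝ) ≤ R k + s := by have := (le_max_right 1 (1-s)).trans hk.le; linarith
  have hp1 : 0 < L (R k) := hLpos _ hRk
  have hp2 : 0 < L (R k + s) := hLpos _ hRs
  have e1 : x k + u k = Real.log (R k + s) := by rw [hx, hu]; ring
  rw [e1, hh]
  simp only []
  rw [Real.exp_log (by linarith : (0:ℝ) < R k + s), Real.exp_log (by linarith : (0:ℝ) < R k),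
    Real.exp_sub, Real.exp_log hp2, Real.exp_log hp1]
  simp [Function.comp]

private lemma shellA (δ α c : ℝ) (hα : 0 < α)
    (L : ℝ → ℝ) (hLpos : ∀ t ≥ (1:ℝ), 0 < L t)
    (hLmeas : Measurable L)
    (hLslow : ∀ c : ℝ, 0 < c →
      Filter.Tendsto (fun t => L (c * t) / L t) Filter.atTop (nhds 1))
    (t : ℕ → ℝ)
    (hshell : ∀ Δ : ℝ, 0 < Δ →
      Filter.Tendsto (fun R : ℝ => (R ^ α / L R) *
          ∑' n : ℕ, Set.indicator {m : ℕ | R ≤ t m ∧ t m < R + Δ}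
            (fun m => Real.exp (-δ * t m)) n)
        Filter.atTop (nhds (c * Δ)))
    (s Δ' : ℝ) (hΔ' : 0 < Δ') :
    Tendsto (fun R : ℝ => (R ^ α / L R) *
        ∑' n : ℕ, Set.indicator {m : ℕ | R + s ≤ t m ∧ t m < R + s + Δ'}
          (fun m => Real.exp (-δ * t m)) n)
      atTop (nhds (c * Δ')) := by
  have h1 : Tendsto (fun R : ℝ => ((R + s) ^ α / L (R + s)) *
      ∑' n : ℕ, Set.indicator {m : ℕ | R + s ≤ t m ∧ t m < R + s + Δ'}
        (fun m => Real.exp (-δ * t m)) n) atTop (nhds (c * Δ')) := by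
    have := (hshell Δ' hΔ').comp (tendsto_atTop_add_const_right atTop s tendsto_id)
    simpa [Function.comp_def] using this
  have hratio : Tendsto (fun R : ℝ => (R ^ α / L R) / ((R + s) ^ α / L (R + s)))
      atTop (nhds 1) := by
    have hbase : Tendsto (fun R : ℝ => R / (R + s)) atTop (nhds 1) := by
      have hd := (tendsto_const_nhds (x := (s:ℝ))).div_atTop
        (tendsto_atTop_add_const_right atTop s tendsto_id)
      have h2 : Tendsto (fun R : ℝ => 1 - s / (R + s)) atTop (nhds 1) := by
        have := (tendsto_const_nhds (x := (1:ℝ)) (f := (atTop : Filter ℝ))).sub hd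
        simpa using this
      apply h2.congr'
      filter_upwards [eventually_gt_atTop (max 1 (1 - s))] with R hR
      have h3 : (0:ℝ) < R + s := by
        have := (le_max_right 1 (1-s)).trans hR.le; linarith
      field_simp
      ring
    have hpow : Tendsto (fun R : ℝ => (R / (R + s)) ^ α) atTop (nhds 1) := by
      have hc : ContinuousAt (fun z : ℝ => z ^ α) 1 :=
        Real.continuousAt_rpow_const 1 α (Or.inl one_ne_zero)
      have := hc.tendsto.comp hbase
      simpa [Function.comp_def, Real.one_rpow] using this
    have hL := Lshift L hLpos hLmeas hLslow s
    have := hpow.mul hL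
    rw [mul_one] at this
    apply this.congr'
    filter_upwards [eventually_gt_atTop (max 1 (1 - s))] with R hR
    have hR1 : (1:ℝ) ≤ R := (le_max_left 1 (1-s)).trans hR.le
    have hRs : (1:ℝ) ≤ R + s := by have := (le_max_right 1 (1-s)).trans hR.le; linarith
    have hp1 : 0 < L R := hLpos _ hR1
    have hp2 : 0 < L (R + s) := hLpos _ hRs
    have hq1 : (0:ℝ) < R ^ α := Real.rpow_pos_of_pos (by linarith) α
    have hq2 : (0:ℝ) < (R + s) ^ α := Real.rpow_pos_of_pos (by linarith) α
    rw [Real.div_rpow (by linarith) (by linarith)]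
    field_simp
  have hmain := hratio.mul h1
  rw [one_mul] at hmain
  apply hmain.congr'
  filter_upwards [eventually_gt_atTop (max 1 (1 - s))] with R hR
  have hRs : (1:ℝ) ≤ R + s := by have := (le_max_right 1 (1-s)).trans hR.le; linarith
  have hp2 : 0 < L (R + s) := hLpos _ hRs
  have hq2 : (0:ℝ) < (R + s) ^ α := Real.rpow_pos_of_pos (by linarith) α
  have hne : ((R + s) ^ α / L (R + s)) ≠ 0 := by positivity
  set S := ∑' n : ℕ, Set.indicator {m : ℕ | R + s ≤ t m ∧ t m < R + s + Δ'}
      (fun m => Real.exp (-δ * t m)) n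
  set P' := (R + s) ^ α / L (R + s)
  calc R ^ α / L R / P' * (P' * S) = (R ^ α / L R / P' * P') * S := by ring
    _ = (R ^ α / L R) * S := by rw [div_mul_cancel₀ _ hne]

private lemma summable_shell (w : ℕ → ℝ) (hw : Filter.Tendsto w Filter.atTop Filter.atTop)
    (a b' : ℝ) (F : ℕ → ℝ) :
    Summable (Set.indicator {m : ℕ | a ≤ w m ∧ w m < b'} F) := by
  obtain ⟨N₂, hN₂⟩ := eventually_atTop.1 (hw.eventually_ge_atTop b')
  apply summable_of_ne_finset_zero (s := Finset.range N₂)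
  intro n hn
  have hn' : N₂ ≤ n := by simpa using hn
  apply Set.indicator_of_notMem
  intro hmem
  exact absurd hmem.2 (not_lt.2 (hN₂ n hn'))

private lemma exists_bound_lt (N : ℕ) (f : ℕ → ℝ) : ∃ R₁ : ℝ, ∀ n, n < N → f n < R₁ := by
  induction N with
  | zero => exact ⟨0, fun n hn => absurd hn (Nat.not_lt_zero n)⟩
  | succ N ih =>
    obtain ⟨R₁, hR₁⟩ := ih
    refine ⟨max R₁ (f N) + 1, fun n hn => ?_⟩
    rcases Nat.lt_succ_iff_lt_or_eq.1 hn with h | h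
    · have := le_max_left R₁ (f N); linarith [hR₁ n h]
    · subst h; linarith [le_max_right R₁ (f n)]



/-- Perturbation lemma for renewal-type shell sums (analytic core of the proof of
Proposition 5.2): if `(R^α/L(R)) ∑_{R ≤ t_n < R+Δ} e^{-δ t_n} → c Δ`, `b_n - t_n → β`
and `φ_n → φ_∞` is bounded, then
`(R^α/L(R)) ∑_{R ≤ b_n < R+Δ} φ_n e^{-δ b_n} → φ_∞ c e^{-δβ} Δ`. -/
theorem stmt15 (δ α c β φinf : ℝ) (hδ : 0 < δ) (hα : 0 < α) (hc : 0 ≤ c)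
    (L : ℝ → ℝ) (hLpos : ∀ t ≥ (1:ℝ), 0 < L t)
    (hLmeas : Measurable L)
    (hLslow : SlowlyVarying L)
    (t b : ℕ → ℝ)
    (ht : Filter.Tendsto t Filter.atTop Filter.atTop)
    (hbt : Filter.Tendsto (fun n => b n - t n) Filter.atTop (nhds β))
    (φ : ℕ → ℝ) (hφbdd : ∃ M : ℝ, ∀ n, |φ n| ≤ M)
    (hφ : Filter.Tendsto φ Filter.atTop (nhds φinf))
    (hshell : ∀ Δ : ℝ, 0 < Δ →
      Filter.Tendsto (fun R : ℝ => (R ^ α / L R) *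
          ∑' n : ℕ, Set.indicator {m : ℕ | R ≤ t m ∧ t m < R + Δ}
            (fun m => Real.exp (-δ * t m)) n)
        Filter.atTop (nhds (c * Δ))) :
    ∀ Δ : ℝ, 0 < Δ →
      Filter.Tendsto (fun R : ℝ => (R ^ α / L R) *
          ∑' n : ℕ, Set.indicator {m : ℕ | R ≤ b m ∧ b m < R + Δ}
            (fun m => φ m * Real.exp (-δ * b m)) n)
        Filter.atTop (nhds (φinf * c * Real.exp (-δ * β) * Δ)) := by
  intro Δ hΔ
  have hb : Filter.Tendsto b Filter.atTop Filter.atTop := by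
    apply tendsto_atTop_mono' atTop ?_ (tendsto_atTop_add_const_right atTop (β - 1) ht)
    filter_upwards [hbt.eventually (eventually_ge_nhds (by linarith : β - 1 < β))] with n hn
    show t n + (β - 1) ≤ b n
    linarith
  rw [Metric.tendsto_nhds]
  intro ε₀ hε₀
  set C : ℝ := (|φinf| + 1) * Real.exp (δ * (|β| + 1)) with hC
  set K : ℝ := (1 + 2 * |φinf| * δ) * Real.exp (δ * (|β| + 1)) with hK
  set Q : ℝ := K * (c * (Δ + 2) + 1) + C * (4 * c + 2) +
    Real.exp (δ * (|β| + 1)) * |φinf| * (1 + 2 * c) with hQ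
  have hCpos : 0 < C := by positivity
  have hKpos : 0 < K := by positivity
  have hQpos : 0 ≤ Q := by positivity
  set ε : ℝ := min (1 / (δ + 1)) (min (Δ / 4) (ε₀ / (2 * (Q + 1)))) with hεdef
  have hεpos : 0 < ε := lt_min (by positivity) (lt_min (by positivity) (by positivity))
  have hε1 : ε ≤ 1 := by
    refine le_trans (min_le_left _ _) ?_
    rw [div_le_one (by linarith)]; linarith
  have hεδ : δ * ε ≤ 1 := by
    have h1 : ε ≤ 1 / (δ + 1) := min_le_left _ _
    have h2 : δ * ε ≤ δ * (1 / (δ + 1)) := mul_le_mul_of_nonneg_left h1 hδ.le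
    have h3 : δ * (1 / (δ + 1)) ≤ 1 := by
      rw [mul_one_div, div_le_one (by linarith)]; linarith
    linarith
  have hεΔ : 2 * ε ≤ Δ / 2 := by
    have h1 : ε ≤ Δ / 4 := le_trans (min_le_right _ _) (min_le_left _ _)
    linarith
  have hεQ : ε ≤ ε₀ / (2 * (Q + 1)) := le_trans (min_le_right _ _) (min_le_right _ _)
  clear_value C K Q ε
  have hA := shellA δ α c hα L hLpos hLmeas hLslow t hshell (-β - ε) (Δ + 2 * ε)
    (by linarith)
  have hB := shellA δ α c hα L hLpos hLmeas hLslow t hshell (-β + ε) (Δ - 2 * ε)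
    (by linarith)
  have hNev : ∀ᶠ n in atTop, |φ n - φinf| ≤ ε ∧ |b n - t n - β| ≤ ε := by
    have h1 : ∀ᶠ n in atTop, |φ n - φinf| ≤ ε := by
      have := Metric.tendsto_atTop.1 hφ ε hεpos
      obtain ⟨N, hN⟩ := this
      rw [eventually_atTop]
      exact ⟨N, fun n hn => by have := hN n hn; rw [Real.dist_eq] at this; exact this.le⟩
    have h2 : ∀ᶠ n in atTop, |b n - t n - β| ≤ ε := by
      have := Metric.tendsto_atTop.1 hbt ε hεpos
      obtain ⟨N, hN⟩ := this
      rw [eventually_atTop]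
      exact ⟨N, fun n hn => by have := hN n hn; rw [Real.dist_eq] at this; exact this.le⟩
    exact h1.and h2
  obtain ⟨N, hN⟩ := eventually_atTop.1 hNev
  obtain ⟨R₁, hR₁⟩ := exists_bound_lt N (fun n => max (b n) (t n + β - ε))
  have hAe := Metric.tendsto_nhds.1 hA ε hεpos
  have hBe := Metric.tendsto_nhds.1 hB ε hεpos
  filter_upwards [hAe, hBe, eventually_ge_atTop (max 1 R₁)] with R hAR hBR hRge
  have hR1 : (1:ℝ) ≤ R := le_trans (le_max_left _ _) hRge
  have hRR₁ : R₁ ≤ R := le_trans (le_max_right _ _) hRge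
  -- sets and functions
  set inner : Set ℕ := {m : ℕ | R + (-β + ε) ≤ t m ∧ t m < R + (-β + ε) + (Δ - 2 * ε)}
    with hinner
  set outer : Set ℕ := {m : ℕ | R + (-β - ε) ≤ t m ∧ t m < R + (-β - ε) + (Δ + 2 * ε)}
    with houter
  set bsh : Set ℕ := {m : ℕ | R ≤ b m ∧ b m < R + Δ} with hbsh
  set f : ℕ → ℝ := Set.indicator bsh (fun m => φ m * Real.exp (-δ * b m)) with hf
  set g : ℕ → ℝ := Set.indicator inner (fun m => Real.exp (-δ * t m)) with hg
  set hh : ℕ → ℝ := Set.indicator outer (fun m => Real.exp (-δ * t m)) with hhh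
  -- membership implies large index
  have hidx_b : ∀ n, n ∈ bsh → N ≤ n := by
    intro n hn
    by_contra hlt
    push_neg at hlt
    have h1 := hR₁ n hlt
    have h2 : b n ≤ max (b n) (t n + β - ε) := le_max_left _ _
    have h3 : R ≤ b n := hn.1
    linarith
  have hidx_in : ∀ n, n ∈ inner → N ≤ n := by
    intro n hn
    by_contra hlt
    push_neg at hlt
    have h1 := hR₁ n hlt
    have h2 : t n + β - ε ≤ max (b n) (t n + β - ε) := le_max_right _ _
    have h3 : R + (-β + ε) ≤ t n := hn.1
    linarith
  have hsub : inner ⊆ outer := by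
    intro m hm
    obtain ⟨h1, h2⟩ := hm
    exact ⟨by linarith, by linarith⟩
  have hg_nonneg : ∀ n, 0 ≤ g n := fun n =>
    Set.indicator_nonneg (fun m _ => (Real.exp_pos _).le) n
  have hh_nonneg : ∀ n, 0 ≤ hh n := fun n =>
    Set.indicator_nonneg (fun m _ => (Real.exp_pos _).le) n
  have hg_le_h : ∀ n, g n ≤ hh n := fun n =>
    Set.indicator_le_indicator_of_subset hsub (fun m => (Real.exp_pos _).le) n
  -- the pointwise estimate
  have hptwise : ∀ n, |f n - φinf * Real.exp (-δ * β) * g n| ≤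
      ε * K * hh n + C * (hh n - g n) := by
    intro n
    have hexp_shift : ∀ z r : ℝ, |r| ≤ ε →
        Real.exp (-δ * z) ≤ Real.exp (δ * (|β| + 1)) * Real.exp (-δ * (z - β - r)) := by
      intro z r hr
      rw [← Real.exp_add]
      apply Real.exp_le_exp.2
      have h1 := abs_le.1 hr
      have h2 : -β ≤ |β| := neg_le_abs β
      nlinarith [hδ.le]
    by_cases hin : n ∈ inner
    · have hout : n ∈ outer := hsub hin
      have hnN : N ≤ n := hidx_in n hin
      obtain ⟨hφn, hbn⟩ := hN n hnN
      have habs := abs_le.1 hbn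
      have hin1 : R + (-β + ε) ≤ t n := hin.1
      have hin2 : t n < R + (-β + ε) + (Δ - 2 * ε) := hin.2
      have hbmem : n ∈ bsh := ⟨by linarith, by linarith⟩
      rw [hf, hg, hhh, Set.indicator_of_mem hbmem, Set.indicator_of_mem hin,
        Set.indicator_of_mem hout]
      rw [sub_self, mul_zero, add_zero]
      -- |φ n * exp(-δ b n) - φinf * exp(-δ β) * exp(-δ t n)| ≤ ε * K * exp(-δ t n)
      have h1 : Real.exp (-δ * b n) ≤ Real.exp (δ * (|β| + 1)) * Real.exp (-δ * t n) := by
        have := hexp_shift (b n) (b n - t n - β) hbn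
        rw [show b n - β - (b n - t n - β) = t n by ring] at this
        exact this
      have h2 : |Real.exp (-δ * b n) - Real.exp (-δ * β) * Real.exp (-δ * t n)| ≤
          2 * (δ * ε) * (Real.exp (δ * (|β| + 1)) * Real.exp (-δ * t n)) := by
        have e0 : Real.exp (-δ * β) * Real.exp (-δ * t n) = Real.exp (-δ * (t n + β)) := by
          rw [← Real.exp_add]; ring_nf
        have e1 : Real.exp (-δ * b n) =
            Real.exp (-δ * (t n + β)) * Real.exp (-δ * (b n - t n - β)) := by
          rw [← Real.exp_add]; congr 1; ring
        rw [e0, e1, show Real.exp (-δ * (t n + β)) * Real.exp (-δ * (b n - t n - β)) -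
          Real.exp (-δ * (t n + β)) =
          Real.exp (-δ * (t n + β)) * (Real.exp (-δ * (b n - t n - β)) - 1) by ring,
          abs_mul, abs_of_pos (Real.exp_pos _)]
        have habs1 : |(-δ * (b n - t n - β))| ≤ 1 := by
          rw [abs_mul, abs_neg, abs_of_pos hδ]
          calc δ * |b n - t n - β| ≤ δ * ε := mul_le_mul_of_nonneg_left hbn hδ.le
            _ ≤ 1 := hεδ
        have hexp1 := Real.abs_exp_sub_one_le habs1
        have habs2 : |(-δ * (b n - t n - β))| ≤ δ * ε := by
          rw [abs_mul, abs_neg, abs_of_pos hδ]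
          exact mul_le_mul_of_nonneg_left hbn hδ.le
        have h3 : Real.exp (-δ * (t n + β)) ≤
            Real.exp (δ * (|β| + 1)) * Real.exp (-δ * t n) := by
          rw [← Real.exp_add]
          apply Real.exp_le_exp.2
          have h2' : -β ≤ |β| := neg_le_abs β
          nlinarith [hδ.le]
        calc Real.exp (-δ * (t n + β)) * |Real.exp (-δ * (b n - t n - β)) - 1|
            ≤ Real.exp (-δ * (t n + β)) * (2 * (δ * ε)) := by
              apply mul_le_mul_of_nonneg_left _ (Real.exp_pos _).le
              calc |Real.exp (-δ * (b n - t n - β)) - 1|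
                  ≤ 2 * |(-δ * (b n - t n - β))| := hexp1
                _ ≤ 2 * (δ * ε) := by linarith
          _ ≤ Real.exp (δ * (|β| + 1)) * Real.exp (-δ * t n) * (2 * (δ * ε)) := by
              apply mul_le_mul_of_nonneg_right h3; positivity
          _ = 2 * (δ * ε) * (Real.exp (δ * (|β| + 1)) * Real.exp (-δ * t n)) := by ring
      calc |φ n * Real.exp (-δ * b n) - φinf * Real.exp (-δ * β) * Real.exp (-δ * t n)|
          = |(φ n - φinf) * Real.exp (-δ * b n) +
            φinf * (Real.exp (-δ * b n) - Real.exp (-δ * β) * Real.exp (-δ * t n))| := by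
            congr 1; ring
        _ ≤ |(φ n - φinf) * Real.exp (-δ * b n)| +
            |φinf * (Real.exp (-δ * b n) - Real.exp (-δ * β) * Real.exp (-δ * t n))| :=
            abs_add_le _ _
        _ = |φ n - φinf| * Real.exp (-δ * b n) +
            |φinf| * |Real.exp (-δ * b n) - Real.exp (-δ * β) * Real.exp (-δ * t n)| := by
            rw [abs_mul, abs_mul, abs_of_pos (Real.exp_pos _)]
        _ ≤ ε * (Real.exp (δ * (|β| + 1)) * Real.exp (-δ * t n)) +
            |φinf| * (2 * (δ * ε) * (Real.exp (δ * (|β| + 1)) * Real.exp (-δ * t n))) := by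
            apply add_le_add
            · exact mul_le_mul hφn h1 (Real.exp_pos _).le hεpos.le
            · exact mul_le_mul_of_nonneg_left h2 (abs_nonneg _)
        _ = ε * K * Real.exp (-δ * t n) := by rw [hK]; ring
    · by_cases hbm : n ∈ bsh
      · have hnN : N ≤ n := hidx_b n hbm
        obtain ⟨hφn, hbn⟩ := hN n hnN
        have habs := abs_le.1 hbn
        have hb1 : R ≤ b n := hbm.1
        have hb2 : b n < R + Δ := hbm.2
        have hout : n ∈ outer := ⟨by linarith, by linarith⟩
        rw [hf, hg, hhh, Set.indicator_of_mem hbm, Set.indicator_of_notMem hin,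
          Set.indicator_of_mem hout]
        rw [mul_zero, sub_zero, sub_zero]
        have h1 : Real.exp (-δ * b n) ≤ Real.exp (δ * (|β| + 1)) * Real.exp (-δ * t n) := by
          have := hexp_shift (b n) (b n - t n - β) hbn
          rw [show b n - β - (b n - t n - β) = t n by ring] at this
          exact this
        have hφabs : |φ n| ≤ |φinf| + 1 := by
          have := abs_sub_abs_le_abs_sub (φ n) φinf
          linarith [hε1]
        calc |φ n * Real.exp (-δ * b n)| = |φ n| * Real.exp (-δ * b n) := by
              rw [abs_mul, abs_of_pos (Real.exp_pos _)]
          _ ≤ (|φinf| + 1) * (Real.exp (δ * (|β| + 1)) * Real.exp (-δ * t n)) :=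
              mul_le_mul hφabs h1 (Real.exp_pos _).le (by positivity)
          _ = C * Real.exp (-δ * t n) := by rw [hC]; ring
          _ ≤ ε * K * Real.exp (-δ * t n) + C * Real.exp (-δ * t n) := by
              have h9 : 0 ≤ ε * K * Real.exp (-δ * t n) := by positivity
              linarith
      · rw [hf, hg, Set.indicator_of_notMem hbm, Set.indicator_of_notMem hin]
        rw [mul_zero, sub_zero, sub_zero, abs_zero]
        have := hh_nonneg n
        positivity
  -- summability
  have hsumf : Summable f := summable_shell b hb R (R + Δ) _
  have hsumg : Summable g := summable_shell t ht (R + (-β + ε)) (R + (-β + ε) + (Δ - 2 * ε)) _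
  have hsumh : Summable hh := summable_shell t ht (R + (-β - ε)) (R + (-β - ε) + (Δ + 2 * ε)) _
  have hsumg' : Summable (fun n => φinf * Real.exp (-δ * β) * g n) := hsumg.mul_left _
  have hsum_fg : Summable (fun n => f n - φinf * Real.exp (-δ * β) * g n) := hsumf.sub hsumg'
  have habs_sum : Summable (fun n => |f n - φinf * Real.exp (-δ * β) * g n|) := hsum_fg.abs
  have hRHS1 : Summable (fun n => ε * K * hh n) := hsumh.mul_left _
  have hRHS2 : Summable (fun n => C * (hh n - g n)) := (hsumh.sub hsumg).mul_left _
  have hRHSsum : Summable (fun n => ε * K * hh n + C * (hh n - g n)) := hRHS1.add hRHS2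
  have htsum1 : |(∑' n, f n) - φinf * Real.exp (-δ * β) * (∑' n, g n)| ≤
      ε * K * (∑' n, hh n) + C * ((∑' n, hh n) - (∑' n, g n)) := by
    rw [← tsum_mul_left, ← Summable.tsum_sub hsumf hsumg']
    calc |∑' n, (f n - φinf * Real.exp (-δ * β) * g n)|
        ≤ ∑' n, |f n - φinf * Real.exp (-δ * β) * g n| := by
          simpa only [Real.norm_eq_abs] using
            norm_tsum_le_tsum_norm (f := fun n => f n - φinf * Real.exp (-δ * β) * g n)
              (by simpa only [Real.norm_eq_abs] using habs_sum)
      _ ≤ ∑' n, (ε * K * hh n + C * (hh n - g n)) := Summable.tsum_le_tsum hptwise habs_sum hRHSsum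
      _ = ε * K * (∑' n, hh n) + C * ((∑' n, hh n) - (∑' n, g n)) := by
          rw [Summable.tsum_add hRHS1 hRHS2, tsum_mul_left, tsum_mul_left, Summable.tsum_sub hsumh hsumg]
  -- multiply by the prefactor
  set P : ℝ := R ^ α / L R with hP
  have hPnn : 0 ≤ P := div_nonneg (Real.rpow_nonneg (by linarith) α) (hLpos R hR1).le
  have htsum2 : |P * (∑' n, f n) - φinf * Real.exp (-δ * β) * (P * (∑' n, g n))| ≤
      ε * K * (P * (∑' n, hh n)) + C * (P * (∑' n, hh n) - P * (∑' n, g n)) := by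
    have h0 := mul_le_mul_of_nonneg_left htsum1 hPnn
    calc |P * (∑' n, f n) - φinf * Real.exp (-δ * β) * (P * (∑' n, g n))|
        = P * |(∑' n, f n) - φinf * Real.exp (-δ * β) * (∑' n, g n)| := by
          rw [show P * (∑' n, f n) - φinf * Real.exp (-δ * β) * (P * (∑' n, g n)) =
            P * ((∑' n, f n) - φinf * Real.exp (-δ * β) * (∑' n, g n)) by ring,
            abs_mul, abs_of_nonneg hPnn]
      _ ≤ P * (ε * K * (∑' n, hh n) + C * ((∑' n, hh n) - (∑' n, g n))) := h0
      _ = ε * K * (P * (∑' n, hh n)) + C * (P * (∑' n, hh n) - P * (∑' n, g n)) := by ring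
  -- final arithmetic
  rw [Real.dist_eq] at hAR hBR ⊢
  set a : ℝ := P * (∑' n, hh n) with ha
  set b2 : ℝ := P * (∑' n, g n) with hb2
  set Fv : ℝ := P * (∑' n, f n) with hFv
  have hARabs := abs_lt.1 hAR
  have hBRabs := abs_lt.1 hBR
  have haup : a ≤ c * (Δ + 2) + 1 := by
    have h1 : a < c * (Δ + 2 * ε) + ε := by linarith [hARabs.2]
    nlinarith [mul_le_mul_of_nonneg_left hε1 hc]
  have hdiff : a - b2 ≤ 4 * c * ε + 2 * ε := by
    have e : c * (Δ + 2 * ε) - c * (Δ - 2 * ε) = 4 * c * ε := by ring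
    linarith [hARabs.2, hBRabs.1]
  have hexpβ : Real.exp (-δ * β) ≤ Real.exp (δ * (|β| + 1)) := by
    apply Real.exp_le_exp.2
    nlinarith [neg_le_abs β, hδ.le]
  have term1 : |Fv - φinf * Real.exp (-δ * β) * b2| ≤
      ε * K * (c * (Δ + 2) + 1) + C * (4 * c * ε + 2 * ε) := by
    calc |Fv - φinf * Real.exp (-δ * β) * b2| ≤ ε * K * a + C * (a - b2) := htsum2
      _ ≤ ε * K * (c * (Δ + 2) + 1) + C * (4 * c * ε + 2 * ε) := by
          apply add_le_add
          · exact mul_le_mul_of_nonneg_left haup (by positivity)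
          · exact mul_le_mul_of_nonneg_left hdiff hCpos.le
  have term2 : |φinf * Real.exp (-δ * β) * b2 -
      φinf * Real.exp (-δ * β) * (c * (Δ - 2 * ε))| ≤
      |φinf| * Real.exp (δ * (|β| + 1)) * ε := by
    rw [← mul_sub, abs_mul, abs_mul, abs_of_pos (Real.exp_pos _)]
    calc |φinf| * Real.exp (-δ * β) * |b2 - c * (Δ - 2 * ε)|
        ≤ |φinf| * Real.exp (-δ * β) * ε := by
          apply mul_le_mul_of_nonneg_left hBR.le (by positivity)
      _ ≤ |φinf| * Real.exp (δ * (|β| + 1)) * ε := by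
          apply mul_le_mul_of_nonneg_right _ hεpos.le
          exact mul_le_mul_of_nonneg_left hexpβ (abs_nonneg _)
  have term3 : |φinf * Real.exp (-δ * β) * (c * (Δ - 2 * ε)) -
      φinf * c * Real.exp (-δ * β) * Δ| ≤
      2 * ε * c * (|φinf| * Real.exp (δ * (|β| + 1))) := by
    rw [show φinf * Real.exp (-δ * β) * (c * (Δ - 2 * ε)) -
      φinf * c * Real.exp (-δ * β) * Δ =
      -(2 * ε * c * (φinf * Real.exp (-δ * β))) by ring, abs_neg, abs_mul,
      abs_of_nonneg (by positivity : (0:ℝ) ≤ 2 * ε * c), abs_mul,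
      abs_of_pos (Real.exp_pos _)]
    apply mul_le_mul_of_nonneg_left _ (by positivity)
    exact mul_le_mul_of_nonneg_left hexpβ (abs_nonneg _)
  have htotal : |Fv - φinf * c * Real.exp (-δ * β) * Δ| ≤ ε * Q := by
    have htri : |Fv - φinf * c * Real.exp (-δ * β) * Δ| ≤
        |Fv - φinf * Real.exp (-δ * β) * b2| +
        |φinf * Real.exp (-δ * β) * b2 - φinf * Real.exp (-δ * β) * (c * (Δ - 2 * ε))| +
        |φinf * Real.exp (-δ * β) * (c * (Δ - 2 * ε)) - φinf * c * Real.exp (-δ * β) * Δ| := by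
      have h1 := abs_sub_le Fv (φinf * Real.exp (-δ * β) * b2)
        (φinf * c * Real.exp (-δ * β) * Δ)
      have h2 := abs_sub_le (φinf * Real.exp (-δ * β) * b2)
        (φinf * Real.exp (-δ * β) * (c * (Δ - 2 * ε))) (φinf * c * Real.exp (-δ * β) * Δ)
      linarith
    have hsum := add_le_add (add_le_add term1 term2) term3
    have heq : ε * K * (c * (Δ + 2) + 1) + C * (4 * c * ε + 2 * ε) +
        |φinf| * Real.exp (δ * (|β| + 1)) * ε +
        2 * ε * c * (|φinf| * Real.exp (δ * (|β| + 1))) = ε * Q := by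
      rw [hQ]; ring
    linarith
  have hfinal : ε * Q < ε₀ := by
    have h1 : ε * Q ≤ (ε₀ / (2 * (Q + 1))) * Q := mul_le_mul_of_nonneg_right hεQ hQpos
    have h2 : (ε₀ / (2 * (Q + 1))) * Q < ε₀ := by
      rw [div_mul_eq_mul_div, div_lt_iff₀ (by linarith)]
      nlinarith
    linarith
  linarith [htotal, hfinal]
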